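/- Let α, e be natural numbers with α ≥ 1, let ν = ν₂(α), and suppose α + 2^ν ≡ 0 (mod 2^L) where L is the least natural number with λ₂ < 2^L for a fixed λ₂ ≥ 1 with ν < L. Then for 0 ≤ e ≤ λ₂, the relation (α + 2e) ⊇_2 e holds if and only if e = 0 or e = 2^j for some j with ν ≤ j ≤ L - 1 and 2^j ≤ λ₂. -/

import Mathlib

/-- `a ⊇_2 b`: every binary digit of `b` is `0` or equals the corresponding digit of `a`. -/
def Sup2 (a b : ℕ) : Prop :=
  ∀ i, b.testBit i = false ∨ b.testBit i = a.testBit i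

/-- `L2 m` is the least `L` with `m < 2 ^ L`. -/
def L2 (m : ℕ) : ℕ :=
  Nat.find (⟨m, by first | exact Nat.lt_two_pow_self | exact Nat.lt_two_pow_self m⟩ : ∃ K, m < 2 ^ K)

lemma tb_iff (n j : ℕ) : n.testBit j = true ↔ 2 ^ j ≤ n % 2 ^ (j + 1) := by
  have hp : 0 < (2:ℕ) ^ j := pow_pos (by norm_num) _
  have hr : n % 2 ^ (j + 1) < 2 ^ j * 2 := by
    have h0 : n % 2 ^ (j + 1) < 2 ^ (j + 1) :=
      Nat.mod_lt _ (pow_pos (by norm_num) _)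
    rwa [pow_succ] at h0
  rw [Nat.testBit_eq_decide_div_mod_eq]
  have h : n % 2 ^ (j + 1) / 2 ^ j = n / 2 ^ j % 2 := by
    rw [pow_succ, Nat.mod_mul_right_div_self]
  constructor
  · intro hd
    have h1 : n / 2 ^ j % 2 = 1 := by simpa using hd
    have h2 : n % 2 ^ (j + 1) / 2 ^ j = 1 := by rw [h, h1]
    have h3 := (Nat.le_div_iff_mul_le hp).mp h2.ge
    simpa using h3
  · intro hle
    have h1 : 1 ≤ n % 2 ^ (j + 1) / 2 ^ j :=
      (Nat.le_div_iff_mul_le hp).mpr (by simpa using hle)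
    have h2 : n % 2 ^ (j + 1) / 2 ^ j < 2 :=
      (Nat.div_lt_iff_lt_mul hp).mpr (by omega)
    set q := n % 2 ^ (j + 1) / 2 ^ j with hq
    have h3 : q = 1 := by omega
    have h4 : n / 2 ^ j % 2 = 1 := h.symm.trans h3
    simp [h4]

lemma mod_sub_pow {a b c : ℕ} (hab : a ≤ b) (hbc : b ≤ c) :
    ((2:ℕ) ^ c - 2 ^ a) % 2 ^ b = 2 ^ b - 2 ^ a := by
  have h1 : (2:ℕ) ^ a ≤ 2 ^ b := Nat.pow_le_pow_right (by norm_num) hab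
  have h2 : (2:ℕ) ^ b ≤ 2 ^ c := Nat.pow_le_pow_right (by norm_num) hbc
  obtain ⟨k, hk⟩ : (2:ℕ) ^ b ∣ 2 ^ c - 2 ^ b := Nat.dvd_sub (pow_dvd_pow 2 hbc) dvd_rfl
  have ha : (0:ℕ) < 2 ^ a := pow_pos (by norm_num) _
  have he : (2:ℕ) ^ c - 2 ^ a = 2 ^ b * k + (2 ^ b - 2 ^ a) := by
    rw [← hk]; omega
  rw [he, Nat.mul_add_mod]
  exact Nat.mod_eq_of_lt (by omega)

lemma mod_two_pow_mul_odd {t m : ℕ} (hm : Odd m) :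
    (2 ^ t * m) % 2 ^ (t + 1) = 2 ^ t := by
  rw [pow_succ, Nat.mul_mod_mul_left]
  have h : m % 2 = 1 := Nat.odd_iff.mp hm
  rw [h, mul_one]

lemma pow_succ_lt (k : ℕ) : (2:ℕ) ^ k < 2 ^ (k + 1) := by
  have h : 0 < (2:ℕ) ^ k := pow_pos (by norm_num) _
  rw [pow_succ]; omega

theorem stmt_7 (lam2 α : ℕ) (hlam : 1 ≤ lam2) (hα : 1 ≤ α)
    (hν : padicValNat 2 α < L2 lam2)
    (hmod : 2 ^ L2 lam2 ∣ (α + 2 ^ padicValNat 2 α)) :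
    ∀ e ≤ lam2,
      (Sup2 (α + 2 * e) e ↔
        e = 0 ∨ ∃ j, padicValNat 2 α ≤ j ∧ j ≤ L2 lam2 - 1 ∧
          e = 2 ^ j ∧ 2 ^ j ≤ lam2) := by
  set ν := padicValNat 2 α with hνdef
  set L := L2 lam2 with hLdef
  have hL : lam2 < 2 ^ L :=
    Nat.find_spec (⟨lam2, Nat.lt_two_pow_self⟩ : ∃ K, lam2 < 2 ^ K)
  have hL1 : 1 ≤ L := by
    by_contra h
    have h0 : L = 0 := by omega
    rw [h0] at hL; simp at hL; omega
  have hνL : (2:ℕ) ^ ν < 2 ^ L := Nat.pow_lt_pow_right (by norm_num) hν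
  have hP : 0 < (2:ℕ) ^ L := pow_pos (by norm_num) _
  have hνP : 0 < (2:ℕ) ^ ν := pow_pos (by norm_num) _
  -- α % 2^L = 2^L - 2^ν
  have hαL : α % 2 ^ L = 2 ^ L - 2 ^ ν := by
    have h2 : α % 2 ^ L < 2 ^ L := Nat.mod_lt _ hP
    have hd1 : (2:ℕ) ^ L ∣ 2 ^ L * (α / 2 ^ L) := Dvd.intro _ rfl
    have hdm := Nat.div_add_mod α (2 ^ L)
    have hd2 : (2:ℕ) ^ L ∣ α % 2 ^ L + 2 ^ ν := by
      have heq : α % 2 ^ L + 2 ^ ν = (α + 2 ^ ν) - 2 ^ L * (α / 2 ^ L) := by omega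
      rw [heq]; exact Nat.dvd_sub hmod hd1
    obtain ⟨k, hk⟩ := hd2
    have hk0 : k ≠ 0 := by rintro rfl; rw [Nat.mul_zero] at hk; omega
    have hk2 : k < 2 := by
      by_contra h'
      have hge : (2:ℕ) ^ L * 2 ≤ 2 ^ L * k := Nat.mul_le_mul_left _ (by omega)
      omega
    have hk1 : k = 1 := by omega
    rw [hk1, mul_one] at hk
    omega
  -- α mod 2^(k+1) for ν ≤ k < L
  have hαk : ∀ k, ν ≤ k → k < L → α % 2 ^ (k + 1) = 2 ^ (k + 1) - 2 ^ ν := by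
    intro k hk1 hk2
    have hd : (2:ℕ) ^ (k + 1) ∣ 2 ^ L := pow_dvd_pow 2 (by omega)
    rw [← Nat.mod_mod_of_dvd α hd, hαL]
    exact mod_sub_pow (by omega) (by omega)
  -- α mod 2^(k+1) for k+1 ≤ ν
  have hα0 : ∀ k, k + 1 ≤ ν → α % 2 ^ (k + 1) = 0 := by
    intro k hk
    have hd : (2:ℕ) ^ (k + 1) ∣ 2 ^ L := pow_dvd_pow 2 (by omega)
    have hkp : 0 < (2:ℕ) ^ (k + 1) := pow_pos (by norm_num) _
    rw [← Nat.mod_mod_of_dvd α hd, hαL]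
    exact Nat.mod_eq_zero_of_dvd
      (Nat.dvd_sub (pow_dvd_pow 2 (by omega)) (pow_dvd_pow 2 hk))
  intro e he
  constructor
  · -- forward direction
    intro hsup
    by_cases he0 : e = 0
    · exact Or.inl he0
    right
    obtain ⟨t, m, hmo, hem⟩ := Nat.exists_eq_two_pow_mul_odd he0
    have hm1 : 1 ≤ m := hmo.pos
    have htP : 0 < (2:ℕ) ^ t := pow_pos (by norm_num) _
    have hte : (2:ℕ) ^ t ≤ e := by
      rw [hem]; exact Nat.le_mul_of_pos_right _ hm1
    have htL : t < L := by
      by_contra h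
      have hc : (2:ℕ) ^ L ≤ 2 ^ t := Nat.pow_le_pow_right (by norm_num) (by omega)
      omega
    -- bit t of e is set
    have hebt : e.testBit t = true := by
      rw [tb_iff, hem, mod_two_pow_mul_odd hmo]
    have hfbt : (α + 2 * e).testBit t = true := by
      rcases hsup t with h | h
      · rw [hebt] at h; exact absurd h (by simp)
      · rw [← h, hebt]
    rw [tb_iff] at hfbt
    -- ν ≤ t
    have hνt : ν ≤ t := by
      by_contra h
      have hz : α % 2 ^ (t + 1) = 0 := hα0 t (by omega)
      have h2e : (2 * e) % 2 ^ (t + 1) = 0 := by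
        rw [hem]
        have hh : 2 * (2 ^ t * m) = 2 ^ (t + 1) * m := by ring
        rw [hh, Nat.mul_mod_right]
      rw [Nat.add_mod, hz, h2e] at hfbt
      have hzz : (0 + 0) % 2 ^ (t + 1) = 0 := by simp
      rw [hzz] at hfbt
      omega
    -- e = 2^t, i.e. m = 1
    have hm : m = 1 := by
      by_contra hm2
      have hm3 : 3 ≤ m := by
        rcases hmo with ⟨w, hw⟩; omega
    -- second lowest bit u
      set e' := e - 2 ^ t with he'def
      have he'0 : e' ≠ 0 := by
        have hc : 2 ^ t * 2 ≤ e := by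
          rw [hem]; exact Nat.mul_le_mul_left _ (by omega)
        omega
      obtain ⟨u, w, hwo, he'⟩ := Nat.exists_eq_two_pow_mul_odd he'0
      have hw1 : 1 ≤ w := hwo.pos
      obtain ⟨m', rfl⟩ : ∃ m', m = m' + 1 := ⟨m - 1, by omega⟩
      have hee : e' = 2 ^ t * m' := by
        rw [he'def, hem, Nat.mul_add, Nat.mul_one]
        omega
      have hdvd : (2:ℕ) ^ (t + 1) ∣ e' := by
        obtain ⟨c, hc⟩ : 2 ∣ m' := by
          rcases hmo with ⟨v, hv⟩; omega
        exact ⟨c, by rw [hee, hc, pow_succ]; ring⟩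
      have htu : t + 1 ≤ u := by
        by_contra h
        have hu' : (2:ℕ) ^ (u + 1) ∣ 2 ^ (t + 1) := pow_dvd_pow 2 (by omega)
        have hdd : (2:ℕ) ^ (u + 1) ∣ 2 ^ u * w := hu'.trans (he' ▸ hdvd)
        rw [pow_succ] at hdd
        have h2w : 2 ∣ w :=
          (Nat.mul_dvd_mul_iff_left (pow_pos (by norm_num) u)).mp hdd
        have hwodd := Nat.odd_iff.mp hwo
        omega
      have huP : 0 < (2:ℕ) ^ u := pow_pos (by norm_num) _
      have hue : (2:ℕ) ^ u ≤ e' := by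
        rw [he']; exact Nat.le_mul_of_pos_right _ hw1
      have huL : u < L := by
        by_contra h
        have hc : (2:ℕ) ^ L ≤ 2 ^ u := Nat.pow_le_pow_right (by norm_num) (by omega)
        omega
      have hsu := pow_succ_lt u
      have hst := pow_succ_lt t
      have htu2 : (2:ℕ) ^ (t + 1) ≤ 2 ^ u := Nat.pow_le_pow_right (by norm_num) htu
      have htu3 : (2:ℕ) ^ t < 2 ^ u := by omega
      -- bit u of e is set
      have hebu : e.testBit u = true := by
        rw [tb_iff]
        have heu : e = 2 ^ t + e' := by omega
        have he'u : e' % 2 ^ (u + 1) = 2 ^ u := by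
          rw [he']; exact mod_two_pow_mul_odd hwo
        have htmod : (2:ℕ) ^ t % 2 ^ (u + 1) = 2 ^ t :=
          Nat.mod_eq_of_lt (by omega)
        rw [heu, Nat.add_mod, he'u, htmod, Nat.mod_eq_of_lt (by omega)]
        omega
      have hfbu : (α + 2 * e).testBit u = true := by
        rcases hsup u with h | h
        · rw [hebu] at h; exact absurd h (by simp)
        · rw [← h, hebu]
      rw [tb_iff] at hfbu
      -- compute (α + 2e) % 2^(u+1) = 2^(t+1) - 2^ν
      have hαu : α % 2 ^ (u + 1) = 2 ^ (u + 1) - 2 ^ ν := hαk u (by omega) huL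
      have h2eu : (2 * e) % 2 ^ (u + 1) = 2 ^ (t + 1) := by
        have heu : 2 * e = 2 ^ (t + 1) + 2 ^ (u + 1) * w := by
          rw [show e = 2 ^ t + e' by omega, he']; ring
        rw [heu, Nat.add_mul_mod_self_left]
        exact Nat.mod_eq_of_lt (by omega)
      have hνt1 : (2:ℕ) ^ ν ≤ 2 ^ (t + 1) :=
        Nat.pow_le_pow_right (by norm_num) (by omega)
      have hfin : (α + 2 * e) % 2 ^ (u + 1) = 2 ^ (t + 1) - 2 ^ ν := by
        rw [Nat.add_mod, hαu, h2eu]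
        have he2 : 2 ^ (u + 1) - 2 ^ ν + 2 ^ (t + 1)
            = 2 ^ (u + 1) + (2 ^ (t + 1) - 2 ^ ν) := by omega
        rw [he2, Nat.add_mod_left]
        exact Nat.mod_eq_of_lt (by omega)
      rw [hfin] at hfbu
      omega
    rw [hm, mul_one] at hem
    exact ⟨t, hνt, by omega, hem, hem ▸ he⟩
  · -- reverse direction
    rintro (rfl | ⟨j, hj1, hj2, rfl, hj3⟩)
    · intro i; left; exact Nat.zero_testBit i
    intro i
    by_cases hij : i = j
    · right
      subst hij
      rw [Nat.testBit_two_pow_self]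
      symm
      rw [tb_iff]
      have hiL : i < L := by omega
      have hαi : α % 2 ^ (i + 1) = 2 ^ (i + 1) - 2 ^ ν := hαk i hj1 hiL
      have h2e : 2 * 2 ^ i = 2 ^ (i + 1) := by rw [pow_succ]; ring
      have a1 : (2:ℕ) ^ ν ≤ 2 ^ i := Nat.pow_le_pow_right (by norm_num) hj1
      have a2 := pow_succ_lt i
      have a3 : 0 < (2:ℕ) ^ i := pow_pos (by norm_num) _
      have a4 : (2:ℕ) ^ (i + 1) = 2 * 2 ^ i := by rw [pow_succ]; ring
      rw [h2e, Nat.add_mod_right, hαi]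
      omega
    · left
      exact Nat.testBit_two_pow_of_ne (Ne.symm hij)
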